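/- arXiv:math/0105105 — 2 statements merged into one kernel-verified Lean document; each statement's English description precedes it below -/
import Mathlib

section
/- The algebraic noncommutative torus A_θ (generated over ℂ by invertible U, V with UV = qVU, q = e^{2πiθ}) is a para-Hopf algebroid over R = ℂ[U,U⁻¹], with α = β the natural embedding, coproduct Δ(UⁿVᵐ) = UⁿVᵐ ⊗_R Vᵐ, counit ε(UⁿVᵐ) = Uⁿ, and para-antipode T(UⁿVᵐ) = q^{nm} Uⁿ V^{−m}. -/
open TensorProduct

noncomputable section

/-- The data of a (pre-)bialgebroid: total algebra `H`, base algebra `R`,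
source map `α` (algebra map), target map `β` (anti-algebra map), a linear lift
`Δ : H → H ⊗[k] H` of the coproduct, and the counit `ε`. -/
structure PreBialgebroid (k H R : Type) [Field k] [Ring H] [Algebra k H]
    [Ring R] [Algebra k R] where
  α : R →ₐ[k] H
  β : R →ₗ[k] H
  β_one : β 1 = 1
  β_mul : ∀ a b : R, β (a * b) = β b * β a
  αβ_comm : ∀ a b : R, α a * β b = β b * α a
  Δ : H →ₗ[k] H ⊗[k] H
  ε : H →ₗ[k] R

namespace PreBialgebroid

variable {k H R : Type} [Field k] [Ring H] [Algebra k H] [Ring R] [Algebra k R]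
variable (D : PreBialgebroid k H R)

/-- The submodule of `H ⊗[k] H` by which one divides to obtain `H ⊗_R H`. -/
def rel2 : Submodule k (H ⊗[k] H) :=
  Submodule.span k {z | ∃ (r : R) (x y : H), z = (D.β r * x) ⊗ₜ[k] y - x ⊗ₜ[k] (D.α r * y)}

/-- The projection `H ⊗[k] H → H ⊗_R H`. -/
def π2 : H ⊗[k] H →ₗ[k] (H ⊗[k] H) ⧸ D.rel2 := D.rel2.mkQ

/-- Relations for the triple tensor product `H ⊗_R H ⊗_R H` (right associated). -/
def rel3 : Submodule k (H ⊗[k] (H ⊗[k] H)) :=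
  Submodule.span k {z |
    (∃ (r : R) (x y w : H), z = (D.β r * x) ⊗ₜ[k] (y ⊗ₜ[k] w) - x ⊗ₜ[k] ((D.α r * y) ⊗ₜ[k] w)) ∨
    (∃ (r : R) (x y w : H), z = x ⊗ₜ[k] ((D.β r * y) ⊗ₜ[k] w) - x ⊗ₜ[k] (y ⊗ₜ[k] (D.α r * w)))}

def π3 : H ⊗[k] (H ⊗[k] H) →ₗ[k] (H ⊗[k] (H ⊗[k] H)) ⧸ D.rel3 := D.rel3.mkQ

/-- For a linear map `f : H → H`, the map `x ⊗ y ↦ f x * y`. -/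
def mulL (f : H →ₗ[k] H) : H ⊗[k] H →ₗ[k] H :=
  TensorProduct.lift
    (LinearMap.mk₂ k (fun x y => f x * y)
      (by intro x x' y; simp [map_add, add_mul])
      (by intro c x y; simp [map_smul, smul_mul_assoc])
      (by intro x y y'; simp [mul_add])
      (by intro c x y; simp [mul_smul_comm]))

/-- For a linear map `f : H → H`, the map `x ⊗ y ↦ f y * x`. -/
def mulR (f : H →ₗ[k] H) : H ⊗[k] H →ₗ[k] H :=
  TensorProduct.lift
    (LinearMap.mk₂ k (fun x y => f y * x)
      (by intro x x' y; simp [mul_add])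
      (by intro c x y; simp [mul_smul_comm])
      (by intro x y y'; simp [map_add, add_mul])
      (by intro c x y; simp [map_smul, smul_mul_assoc]))

/-- The (lift of the) Connes–Moscovici cyclic operator in degree 2:
`x ⊗ y ↦ Δ(T x) · (y ⊗ 1)`. -/
def tau2 (T : H →ₗ[k] H) : H ⊗[k] H →ₗ[k] H ⊗[k] H :=
  TensorProduct.lift
    (LinearMap.mk₂ k (fun x y => D.Δ (T x) * (y ⊗ₜ[k] (1 : H)))
      (by intro x x' y; simp [map_add, add_mul])
      (by intro c x y; simp [map_smul, smul_mul_assoc])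
      (by intro x y y'; simp [add_tmul, mul_add])
      (by intro c x y; simp [← TensorProduct.smul_tmul', mul_smul_comm]))

/-- The bialgebroid axioms, stated for the chosen linear lift `Δ` of the coproduct
modulo the relations defining `H ⊗_R H`. -/
structure IsBialgebroid : Prop where
  Δ_one : D.π2 (D.Δ 1) = D.π2 ((1 : H) ⊗ₜ[k] (1 : H))
  coassoc : ∀ h : H,
    D.π3 ((TensorProduct.assoc k H H H) ((D.Δ.rTensor H) (D.Δ h))) =
      D.π3 ((D.Δ.lTensor H) (D.Δ h))
  Δ_cp3 : ∀ (h : H) (r : R),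
    D.π2 (D.Δ h * (D.β r ⊗ₜ[k] (1 : H) - (1 : H) ⊗ₜ[k] D.α r)) = 0
  Δ_mul : ∀ a b : H, D.π2 (D.Δ (a * b)) = D.π2 (D.Δ a * D.Δ b)
  Δ_left : ∀ (r : R) (h : H),
    D.π2 (D.Δ (D.α r * h)) = D.π2 ((D.α r ⊗ₜ[k] (1 : H)) * D.Δ h)
  Δ_right : ∀ (r : R) (h : H),
    D.π2 (D.Δ (D.β r * h)) = D.π2 (((1 : H) ⊗ₜ[k] D.β r) * D.Δ h)
  ε_one : D.ε 1 = 1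
  ε_left : ∀ (r : R) (h : H), D.ε (D.α r * h) = r * D.ε h
  ε_right : ∀ (r : R) (h : H), D.ε (D.β r * h) = D.ε h * r
  counit_l : ∀ h : H, mulL (D.α.toLinearMap ∘ₗ D.ε) (D.Δ h) = h
  counit_r : ∀ h : H, mulR (D.β ∘ₗ D.ε) (D.Δ h) = h

/-- The para-Hopf algebroid axioms for a para-antipode `T`. -/
structure IsParaHopf (T : H →ₗ[k] H) : Prop where
  bialgebroid : D.IsBialgebroid
  T_one : T 1 = 1
  T_antimul : ∀ a b : H, T (a * b) = T b * T a
  PH1 : ∀ r : R, T (D.β r) = D.α r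
  PH2 : ∀ h : H, mulL T (D.Δ h) = D.β (D.ε (T h))
  T_invol : ∀ h : H, T (T h) = h
  PH3 : ∀ h : H, D.π2 (tau2 D T (D.Δ h)) = D.π2 ((1 : H) ⊗ₜ[k] T h)

end PreBialgebroid

section NCtorus

/-- Hypotheses saying that `A` is the algebraic noncommutative torus `A_θ`: it is
generated by invertible elements `U`, `V` with `UV = qVU`, `q = e^{2πiθ}`, and the
monomials `UⁿVᵐ` form a basis. -/
def IsNCTorus {A : Type} [Ring A] [Algebra ℂ A] (θ : ℝ) (UU VV : Aˣ)
    (b : Module.Basis (ℤ × ℤ) ℂ A) : Prop :=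
  ((UU : A) * VV = Complex.exp (2 * Real.pi * Complex.I * θ) • ((VV : A) * UU)) ∧
  (∀ n m : ℤ, b (n, m) = ((UU ^ n : Aˣ) : A) * ((VV ^ m : Aˣ) : A))

/-- The Laurent polynomial subalgebra `ℂ[U, U⁻¹]` of the noncommutative torus. -/
def laurentSub {A : Type} [Ring A] [Algebra ℂ A] (UU : Aˣ) : Subalgebra ℂ A :=
  Algebra.adjoin ℂ {(UU : A), ((UU⁻¹ : Aˣ) : A)}

end NCtorus


/-! In the group `Aˣ` the relation `VU = q⁻¹UV` with `q` central gives `VᵐUⁿ = q^{-mn}UⁿVᵐ`, so the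
monomials `b (n, m) = UⁿVᵐ` multiply as `b p * b p' = q^{-m n'} b (p + p')`. All structure maps are
defined on this basis and every axiom is an identity between (bi)linear maps, so it suffices to
check it on monomials of `A` and, in the arguments from `R`, on the spanning family `Uᵏ` of
`ℂ[U, U⁻¹]`. There `Δ` is multiplicative on the nose, and the one relation of `A ⊗_R A` that is
used is `Uᵏx ⊗ y = x ⊗ Uᵏy`. -/

theorem SemiconjBy.swap_mul_left {G : Type*} [Group G] {a x z : G}
    (h : SemiconjBy a x (z * x)) : SemiconjBy x a (z⁻¹ * a) := by
  unfold SemiconjBy at h ⊢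
  rw [mul_assoc, h]
  group

theorem SemiconjBy.zpow_right_of_mem_center {G : Type*} [Group G] {a x z : G}
    (hz : z ∈ Subgroup.center G) (h : SemiconjBy a x (z * x)) (m : ℤ) :
    SemiconjBy a (x ^ m) (z ^ m * x ^ m) := by
  have hzx : Commute z x := (Subgroup.mem_center_iff.mp hz x).symm
  simpa only [hzx.mul_zpow] using h.zpow_right m

theorem SemiconjBy.zpow_zpow_of_mem_center {G : Type*} [Group G] {a x z : G}
    (hz : z ∈ Subgroup.center G) (h : SemiconjBy a x (z * x)) (n m : ℤ) :
    SemiconjBy (a ^ n) (x ^ m) (z ^ (n * m) * x ^ m) := by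
  have hxa : SemiconjBy x (a ^ n) (z⁻¹ ^ n * a ^ n) :=
    h.swap_mul_left.zpow_right_of_mem_center (Subgroup.inv_mem _ hz) n
  have hax : SemiconjBy (a ^ n) x (z ^ n * x) := by
    simpa only [inv_zpow, inv_inv] using hxa.swap_mul_left
  simpa only [zpow_mul] using hax.zpow_right_of_mem_center (Subgroup.zpow_mem _ hz n) m

namespace PreBialgebroid

variable {k H R : Type} [Field k] [Ring H] [Algebra k H] [Ring R] [Algebra k R]
  (D : PreBialgebroid k H R)

theorem tmul_sub_tmul_mem_rel2 (r : R) (x y : H) :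
    (D.β r * x) ⊗ₜ[k] y - x ⊗ₜ[k] (D.α r * y) ∈ D.rel2 :=
  Submodule.subset_span ⟨r, x, y, rfl⟩

theorem π2_β_mul_tmul (r : R) (x y : H) :
    D.π2 ((D.β r * x) ⊗ₜ[k] y) = D.π2 (x ⊗ₜ[k] (D.α r * y)) :=
  (Submodule.Quotient.eq _).mpr (D.tmul_sub_tmul_mem_rel2 r x y)

theorem mul_mem_rel2 {z : H ⊗[k] H} (hz : z ∈ D.rel2) (w : H ⊗[k] H) : z * w ∈ D.rel2 := by
  induction hz using Submodule.span_induction with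
  | mem z hz =>
    obtain ⟨r, x, y, rfl⟩ := hz
    induction w using TensorProduct.induction_on with
    | zero => simp
    | tmul a c =>
      simpa only [sub_mul, Algebra.TensorProduct.tmul_mul_tmul, mul_assoc] using
        D.tmul_sub_tmul_mem_rel2 r (x * a) (y * c)
    | add w w' hw hw' => simpa only [mul_add] using add_mem hw hw'
  | zero => simp
  | add z z' _ _ hz hz' => simpa only [add_mul] using add_mem hz hz'
  | smul c z _ hz => simpa only [smul_mul_assoc] using Submodule.smul_mem _ c hz

theorem π2_mul_right {x y : H ⊗[k] H} (h : D.π2 x = D.π2 y) (w : H ⊗[k] H) :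
    D.π2 (x * w) = D.π2 (y * w) := by
  refine (Submodule.Quotient.eq _).mpr ?_
  simpa only [sub_mul] using D.mul_mem_rel2 ((Submodule.Quotient.eq _).mp h) w

end PreBialgebroid

section Laurent

variable {A : Type} [Ring A] [Algebra ℂ A] (UU : Aˣ)

theorem laurentSub_toSubmodule :
    Subalgebra.toSubmodule (laurentSub UU) =
      Submodule.span ℂ (Set.range fun k : ℤ => ((UU ^ k : Aˣ) : A)) := by
  have hgen : ({(UU : A), ((UU⁻¹ : Aˣ) : A)} : Set A) = Units.coeHom A '' ({UU} ∪ {UU}⁻¹) := by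
    rw [Set.singleton_union, Set.inv_singleton, Set.image_pair]
    rfl
  rw [laurentSub, Algebra.adjoin_eq_span, hgen, ← MonoidHom.map_mclosure,
    ← Subgroup.closure_toSubmonoid, ← Subgroup.zpowers_eq_closure, Submonoid.coe_map]
  congr 1
  ext x
  simp [Subgroup.mem_zpowers_iff]

theorem zpow_mem_laurentSub (k : ℤ) : ((UU ^ k : Aˣ) : A) ∈ laurentSub UU := by
  rw [← Subalgebra.mem_toSubmodule, laurentSub_toSubmodule]
  exact Submodule.subset_span ⟨k, rfl⟩

def laurentMonomial (k : ℤ) : laurentSub UU := ⟨_, zpow_mem_laurentSub UU k⟩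

theorem span_range_laurentMonomial :
    Submodule.span ℂ (Set.range (laurentMonomial UU)) = ⊤ := by
  apply Submodule.map_injective_of_injective (f := (laurentSub UU).val.toLinearMap)
    Subtype.val_injective
  rw [Submodule.map_span, ← Set.range_comp, Submodule.map_top]
  refine (laurentSub_toSubmodule UU).symm.trans ?_
  ext x
  simp

instance : IsMulCommutative (laurentSub UU) :=
  Algebra.isMulCommutative_adjoin ℂ (by rintro x (rfl | rfl) y (rfl | rfl) <;> simp)

variable {UU} {ι : Type} {b : Module.Basis ι ℂ A} {M : Type} [AddCommGroup M] [Module ℂ M]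

theorem laurentSub_linearMap_ext {f g : laurentSub UU →ₗ[ℂ] M}
    (h : ∀ k, f (laurentMonomial UU k) = g (laurentMonomial UU k)) : f = g :=
  LinearMap.ext_on_range (span_range_laurentMonomial UU) h

theorem laurentSub_bilinear_ext {f g : laurentSub UU →ₗ[ℂ] A →ₗ[ℂ] M}
    (h : ∀ k i, f (laurentMonomial UU k) (b i) = g (laurentMonomial UU k) (b i)) : f = g :=
  laurentSub_linearMap_ext fun k => b.ext (h k)

end Laurent

namespace NCTorus

variable {A : Type} [Ring A] [Algebra ℂ A] {θ : ℝ} {UU : Aˣ} {b : Module.Basis (ℤ × ℤ) ℂ A}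

def q (θ : ℝ) : ℂ := Complex.exp (2 * Real.pi * Complex.I * θ)

theorem q_ne_zero (θ : ℝ) : q θ ≠ 0 := Complex.exp_ne_zero _

variable (A) in
/-- `q` as a central unit of `A`, so that the commutation relation lives in the group `Aˣ`. -/
def qUnit (θ : ℝ) : Aˣ := Units.map (algebraMap ℂ A).toMonoidHom (Units.mk0 (q θ) (q_ne_zero θ))

theorem qUnit_mem_center (θ : ℝ) : qUnit A θ ∈ Subgroup.center Aˣ :=
  Subgroup.mem_center_iff.mpr fun g => Units.ext (Algebra.commutes (q θ) (g : A)).symm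

theorem qUnit_zpow_mul (θ : ℝ) (k : ℤ) (x : A) :
    ((qUnit A θ ^ k : Aˣ) : A) * x = q θ ^ k • x := by
  rw [qUnit, ← map_zpow, Units.coe_map, Units.val_zpow_eq_zpow_val, Units.val_mk0,
    Algebra.smul_def]
  rfl

def coproduct (b : Module.Basis (ℤ × ℤ) ℂ A) : A →ₗ[ℂ] A ⊗[ℂ] A :=
  b.constr ℂ fun p => b p ⊗ₜ b (0, p.2)

def counit (UU : Aˣ) (b : Module.Basis (ℤ × ℤ) ℂ A) : A →ₗ[ℂ] laurentSub UU :=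
  b.constr ℂ fun p => laurentMonomial UU p.1

def paraAntipode (θ : ℝ) (b : Module.Basis (ℤ × ℤ) ℂ A) : A →ₗ[ℂ] A :=
  b.constr ℂ fun p => q θ ^ (p.1 * p.2) • b (p.1, -p.2)

@[simp]
theorem coproduct_basis (p : ℤ × ℤ) : coproduct b (b p) = b p ⊗ₜ b (0, p.2) :=
  b.constr_basis ℂ _ p

@[simp]
theorem counit_basis (p : ℤ × ℤ) : counit UU b (b p) = laurentMonomial UU p.1 :=
  b.constr_basis ℂ _ p

@[simp]
theorem paraAntipode_basis (p : ℤ × ℤ) :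
    paraAntipode θ b (b p) = q θ ^ (p.1 * p.2) • b (p.1, -p.2) :=
  b.constr_basis ℂ _ p

theorem paraAntipode_involutive : Function.Involutive (paraAntipode θ b) := by
  intro x
  refine LinearMap.congr_fun (f := paraAntipode θ b ∘ₗ paraAntipode θ b) (g := LinearMap.id)
    (b.ext fun p => ?_) x
  simp [smul_smul, mul_inv_cancel₀ (zpow_ne_zero _ (q_ne_zero θ))]

@[simps]
def preBialgebroid (UU : Aˣ) (b : Module.Basis (ℤ × ℤ) ℂ A) :
    PreBialgebroid ℂ A (laurentSub UU) where
  α := (laurentSub UU).val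
  β := (laurentSub UU).val.toLinearMap
  β_one := rfl
  β_mul r s := congrArg Subtype.val (mul_comm' r s)
  αβ_comm r s := congrArg Subtype.val (mul_comm' r s)
  Δ := coproduct b
  ε := counit UU b

end NCTorus

namespace IsNCTorus

open NCTorus PreBialgebroid

variable {A : Type} [Ring A] [Algebra ℂ A] {θ : ℝ} {UU VV : Aˣ} {b : Module.Basis (ℤ × ℤ) ℂ A}
  (ht : IsNCTorus θ UU VV b)
include ht

theorem semiconjBy : SemiconjBy VV UU ((qUnit A θ)⁻¹ * UU) := by
  refine SemiconjBy.swap_mul_left (Units.ext ?_)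
  simp only [Units.val_mul, mul_assoc]
  rw [← zpow_one (qUnit A θ), qUnit_zpow_mul, zpow_one]
  exact ht.1

theorem basis_eq (p : ℤ × ℤ) : b p = ((UU ^ p.1 * VV ^ p.2 : Aˣ) : A) := by
  rw [Units.val_mul, ← ht.2]

theorem basis_mul (p p' : ℤ × ℤ) : b p * b p' = q θ ^ (-(p.2 * p'.1)) • b (p + p') := by
  obtain ⟨n, m⟩ := p
  obtain ⟨n', m'⟩ := p'
  set z := qUnit A θ ^ (-(m * n'))
  have hcomm : VV ^ m * UU ^ n' = z * (UU ^ n' * VV ^ m) := by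
    rw [(ht.semiconjBy.zpow_zpow_of_mem_center (Subgroup.inv_mem _ (qUnit_mem_center θ))
      m n').eq, inv_zpow', mul_assoc]
  have hz : UU ^ n * z = z * UU ^ n :=
    Subgroup.mem_center_iff.mp (Subgroup.zpow_mem _ (qUnit_mem_center θ) _) _
  have hunits : UU ^ n * VV ^ m * (UU ^ n' * VV ^ m') = z * (UU ^ (n + n') * VV ^ (m + m')) :=
    calc UU ^ n * VV ^ m * (UU ^ n' * VV ^ m') = UU ^ n * (VV ^ m * UU ^ n') * VV ^ m' := by
          group
      _ = UU ^ n * z * (UU ^ n' * VV ^ m) * VV ^ m' := by rw [hcomm]; group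
      _ = z * (UU ^ (n + n') * VV ^ (m + m')) := by rw [hz]; group
  rw [ht.basis_eq, ht.basis_eq, ht.basis_eq, ← Units.val_mul, hunits, Units.val_mul,
    qUnit_zpow_mul]
  rfl

theorem basis_fst_mul (k n m : ℤ) : b (k, 0) * b (n, m) = b (k + n, m) := by
  simp [ht.basis_mul]

theorem basis_zero : b (0, 0) = 1 := by
  simp [ht.basis_eq]

theorem coe_laurentMonomial (k : ℤ) : (laurentMonomial UU k : A) = b (k, 0) := by
  simp [laurentMonomial, ht.basis_eq]

theorem coproduct_mul (x y : A) : coproduct b (x * y) = coproduct b x * coproduct b y := by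
  refine LinearMap.congr_fun₂ (f := (LinearMap.mul ℂ A).compr₂ (coproduct b))
    (g := (LinearMap.mul ℂ (A ⊗[ℂ] A)).compl₁₂ (coproduct b) (coproduct b))
    (LinearMap.ext_basis b b fun p p' => ?_) x y
  simp [ht.basis_mul, Algebra.TensorProduct.tmul_mul_tmul, TensorProduct.smul_tmul']

theorem coproduct_one : coproduct b 1 = 1 := by
  simpa [ht.basis_zero, Algebra.TensorProduct.one_def] using coproduct_basis (b := b) (0, 0)

theorem coproduct_laurentSub (r : laurentSub UU) : coproduct b r = (r : A) ⊗ₜ[ℂ] (1 : A) := by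
  refine LinearMap.congr_fun (f := coproduct b ∘ₗ (laurentSub UU).val.toLinearMap)
    (g := (TensorProduct.mk ℂ A A).flip 1 ∘ₗ (laurentSub UU).val.toLinearMap)
    (laurentSub_linearMap_ext fun k => ?_) r
  simp [ht.coe_laurentMonomial, ht.basis_zero]

theorem counit_laurentSub_mul (r : laurentSub UU) (h : A) :
    counit UU b (r * h) = r * counit UU b h := by
  refine LinearMap.congr_fun₂
    (f := ((LinearMap.mul ℂ A).compl₁₂ (laurentSub UU).val.toLinearMap LinearMap.id).compr₂
      (counit UU b))
    (g := (LinearMap.mul ℂ (laurentSub UU)).compl₂ (counit UU b))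
    (laurentSub_bilinear_ext (b := b) fun k p => ?_) r h
  apply Subtype.ext
  simp [ht.coe_laurentMonomial, ht.basis_mul]

theorem π2_coproduct_mul_tmul_sub_tmul (h : A) (r : laurentSub UU) :
    (preBialgebroid UU b).π2
      (coproduct b h * ((r : A) ⊗ₜ[ℂ] (1 : A) - (1 : A) ⊗ₜ[ℂ] (r : A))) = 0 := by
  refine LinearMap.congr_fun₂
    (f := ((LinearMap.mul ℂ (A ⊗[ℂ] A)).compl₁₂ (coproduct b)
      ((TensorProduct.mk ℂ A A).flip 1 ∘ₗ (laurentSub UU).val.toLinearMap -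
        TensorProduct.mk ℂ A A 1 ∘ₗ (laurentSub UU).val.toLinearMap)).flip.compr₂
      (preBialgebroid UU b).π2)
    (g := 0) (laurentSub_bilinear_ext (b := b) fun k p => ?_) r h
  obtain ⟨n, m⟩ := p
  have hrel := (preBialgebroid UU b).π2_β_mul_tmul (laurentMonomial UU k) (b (n, m)) (b (0, m))
  simp only [preBialgebroid_α, preBialgebroid_β, AlgHom.toLinearMap_apply, Subalgebra.coe_val,
    ht.coe_laurentMonomial, ht.basis_fst_mul, add_zero] at hrel
  have hprod : b (n, m) ⊗ₜ[ℂ] b (0, m) * (b (k, 0) ⊗ₜ[ℂ] (1 : A) - (1 : A) ⊗ₜ[ℂ] b (k, 0)) =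
      q θ ^ (-(m * k)) • (b (k + n, m) ⊗ₜ[ℂ] b (0, m) - b (n, m) ⊗ₜ[ℂ] b (k, m)) := by
    simp [mul_sub, Algebra.TensorProduct.tmul_mul_tmul, ht.basis_mul, add_comm,
      TensorProduct.smul_tmul', smul_sub]
  simp only [LinearMap.compr₂_apply, LinearMap.flip_apply, LinearMap.compl₁₂_apply,
    LinearMap.mul_apply', LinearMap.sub_apply, LinearMap.comp_apply, TensorProduct.mk_apply,
    AlgHom.toLinearMap_apply, Subalgebra.coe_val, ht.coe_laurentMonomial, coproduct_basis,
    LinearMap.zero_apply]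
  rw [hprod, map_smul, map_sub, hrel, sub_self, smul_zero]

theorem paraAntipode_mul (x y : A) :
    paraAntipode θ b (x * y) = paraAntipode θ b y * paraAntipode θ b x := by
  refine LinearMap.congr_fun₂ (f := (LinearMap.mul ℂ A).compr₂ (paraAntipode θ b))
    (g := ((LinearMap.mul ℂ A).compl₁₂ (paraAntipode θ b) (paraAntipode θ b)).flip)
    (LinearMap.ext_basis b b fun p p' => ?_) x y
  obtain ⟨n, m⟩ := p
  obtain ⟨n', m'⟩ := p'
  simp only [LinearMap.compr₂_apply, LinearMap.flip_apply, LinearMap.compl₁₂_apply,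
    LinearMap.mul_apply']
  simp only [ht.basis_mul, map_smul, paraAntipode_basis, smul_mul_assoc, mul_smul_comm, smul_smul,
    ← zpow_add₀ (q_ne_zero θ), Prod.mk_add_mk]
  congr 2
  · ring
  · ext <;> dsimp only <;> ring

theorem paraAntipode_laurentSub (r : laurentSub UU) : paraAntipode θ b r = r := by
  refine LinearMap.congr_fun (f := paraAntipode θ b ∘ₗ (laurentSub UU).val.toLinearMap)
    (g := (laurentSub UU).val.toLinearMap) (laurentSub_linearMap_ext fun k => ?_) r
  simp [ht.coe_laurentMonomial]

theorem isBialgebroid : (preBialgebroid UU b).IsBialgebroid where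
  Δ_one := by simp [ht.coproduct_one, Algebra.TensorProduct.one_def]
  coassoc h := congrArg _ <| LinearMap.congr_fun
    (f := (TensorProduct.assoc ℂ A A A).toLinearMap ∘ₗ (coproduct b).rTensor A ∘ₗ coproduct b)
    (g := (coproduct b).lTensor A ∘ₗ coproduct b) (b.ext fun p => by simp) h
  Δ_cp3 := ht.π2_coproduct_mul_tmul_sub_tmul
  Δ_mul x y := by simp [ht.coproduct_mul]
  Δ_left r h := by simp [ht.coproduct_mul, ht.coproduct_laurentSub]
  Δ_right r h := by
    have hr := (preBialgebroid UU b).π2_β_mul_tmul r 1 1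
    simp only [preBialgebroid_α, preBialgebroid_β, AlgHom.toLinearMap_apply, mul_one] at hr
    simpa [ht.coproduct_mul, ht.coproduct_laurentSub] using
      (preBialgebroid UU b).π2_mul_right hr (coproduct b h)
  ε_one := by
    apply Subtype.ext
    simpa [ht.basis_zero, ht.coe_laurentMonomial] using
      congrArg Subtype.val (counit_basis (UU := UU) (b := b) (0, 0))
  ε_left := ht.counit_laurentSub_mul
  ε_right r h := (ht.counit_laurentSub_mul r h).trans (mul_comm' _ _)
  counit_l h := LinearMap.congr_fun
    (f := mulL ((laurentSub UU).val.toLinearMap ∘ₗ counit UU b) ∘ₗ coproduct b) (g := .id)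
    (b.ext fun p => by simp [mulL, ht.coe_laurentMonomial, ht.basis_fst_mul]) h
  counit_r h := LinearMap.congr_fun
    (f := mulR ((laurentSub UU).val.toLinearMap ∘ₗ counit UU b) ∘ₗ coproduct b) (g := .id)
    (b.ext fun p => by simp [mulR, ht.coe_laurentMonomial, ht.basis_fst_mul]) h

theorem isParaHopf : (preBialgebroid UU b).IsParaHopf (paraAntipode θ b) where
  bialgebroid := ht.isBialgebroid
  T_one := by simpa [ht.basis_zero] using paraAntipode_basis (θ := θ) (b := b) (0, 0)
  T_antimul := ht.paraAntipode_mul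
  PH1 := ht.paraAntipode_laurentSub
  PH2 h := LinearMap.congr_fun (f := mulL (paraAntipode θ b) ∘ₗ coproduct b)
    (g := (laurentSub UU).val.toLinearMap ∘ₗ counit UU b ∘ₗ paraAntipode θ b)
    (b.ext fun p => by simp [mulL, ht.coe_laurentMonomial, ht.basis_mul]) h
  T_invol := paraAntipode_involutive
  PH3 h := LinearMap.congr_fun
    (f := (preBialgebroid UU b).π2 ∘ₗ tau2 (preBialgebroid UU b) (paraAntipode θ b) ∘ₗ
      coproduct b)
    (g := (preBialgebroid UU b).π2 ∘ₗ TensorProduct.mk ℂ A A 1 ∘ₗ paraAntipode θ b)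
    (b.ext fun p => by
      have hrel := (preBialgebroid UU b).π2_β_mul_tmul (laurentMonomial UU p.1) 1 (b (0, -p.2))
      simp only [preBialgebroid_α, preBialgebroid_β, AlgHom.toLinearMap_apply, Subalgebra.coe_val,
        ht.coe_laurentMonomial, mul_one, ht.basis_fst_mul, add_zero] at hrel
      simp [tau2, ht.basis_mul, Algebra.TensorProduct.tmul_mul_tmul, hrel]) h

end IsNCTorus

/-- the noncommutative torus `A_θ` is a para-Hopf algebroid over
`R = ℂ[U,U⁻¹]`, with `α = β` the inclusion, `Δ(UⁿVᵐ) = UⁿVᵐ ⊗_R Vᵐ`,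
`ε(UⁿVᵐ) = Uⁿ` and `T(UⁿVᵐ) = q^{nm} Uⁿ V^{-m}`. -/
theorem ncTorus_is_paraHopf {A : Type} [Ring A] [Algebra ℂ A] (θ : ℝ)
    (UU VV : Aˣ) (b : Module.Basis (ℤ × ℤ) ℂ A) (htorus : IsNCTorus θ UU VV b) :
    ∃ (D : PreBialgebroid ℂ A (laurentSub UU)) (T : A →ₗ[ℂ] A),
      D.IsParaHopf T ∧
      D.α = (laurentSub UU).val ∧
      D.β = (laurentSub UU).val.toLinearMap ∧
      (∀ n m : ℤ,
        D.π2 (D.Δ (b (n, m))) = D.π2 (b (n, m) ⊗ₜ[ℂ] b (0, m)) ∧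
        (D.ε (b (n, m)) : A) = b (n, 0) ∧
        T (b (n, m)) = (Complex.exp (2 * Real.pi * Complex.I * θ) ^ (n * m)) • b (n, -m)) :=
  ⟨NCTorus.preBialgebroid UU b, NCTorus.paraAntipode θ b, htorus.isParaHopf, rfl, rfl,
    fun n m => ⟨by simp, by simp [htorus.coe_laurentMonomial], NCTorus.paraAntipode_basis (n, m)⟩⟩
end
end

section
/- In the algebraic noncommutative torus A_θ with the para-Hopf algebroid structure over ℂ[U,U⁻¹] (Δ(UⁿVᵐ) = UⁿVᵐ⊗_R Vᵐ, T(UⁿVᵐ) = q^{nm}UⁿV^{−m}), the Connes–Moscovici cyclic operator τ₂ on A_θ⊗_R A_θ, defined by τ₂(h₁⊗_R h₂) = Δ(T(h₁))·(h₂⊗1), satisfies τ₂³(1⊗_R U) = 1⊗_R U and τ₂³(1⊗_R V) = 1⊗_R V. -/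
open TensorProduct

noncomputable section

/-!
Once the coproduct of a monomial is known, `τ₂` acts on `A_θ ⊗_R A_θ` by
`UⁿVᵐ ⊗ y ↦ q^{nm} UⁿV⁻ᵐ y ⊗ V⁻ᵐ`. Hence `τ₂` fixes `U ⊗ 1`, which equals `1 ⊗ U` in the
balanced tensor product, and cycles `1 ⊗ V ↦ V ⊗ 1 ↦ V⁻¹ ⊗ V⁻¹ ↦ 1 ⊗ V`.
-/

namespace PreBialgebroid

variable {k H R : Type} [Field k] [Ring H] [Algebra k H] [Ring R] [Algebra k R]
  (D : PreBialgebroid k H R)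

theorem π2_eq_iff {a c : H ⊗[k] H} : D.π2 a = D.π2 c ↔ a - c ∈ D.rel2 :=
  Submodule.Quotient.eq _

theorem π2_mul_congr {a c : H ⊗[k] H} (h : D.π2 a = D.π2 c) (w : H ⊗[k] H) :
    D.π2 (a * w) = D.π2 (c * w) := by
  rw [π2_eq_iff] at h ⊢
  simpa only [sub_mul] using D.mul_mem_rel2 h w

theorem π2_β_tmul_one (r : R) : D.π2 (D.β r ⊗ₜ[k] 1) = D.π2 (1 ⊗ₜ[k] D.α r) :=
  (D.π2_eq_iff).2 <| Submodule.subset_span ⟨r, 1, 1, by simp⟩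

theorem tau2_tmul (T : H →ₗ[k] H) (x y : H) :
    tau2 D T (x ⊗ₜ[k] y) = D.Δ (T x) * (y ⊗ₜ[k] 1) :=
  rfl

theorem tau_π2_monomial_tmul (T : H →ₗ[k] H) (b : ℤ × ℤ → H) (q : k)
    (hΔ : ∀ n m : ℤ, D.π2 (D.Δ (b (n, m))) = D.π2 (b (n, m) ⊗ₜ[k] b (0, m)))
    (hT : ∀ n m : ℤ, T (b (n, m)) = q ^ (n * m) • b (n, -m))
    (tau : (H ⊗[k] H) ⧸ D.rel2 →ₗ[k] (H ⊗[k] H) ⧸ D.rel2)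
    (htau : tau ∘ₗ D.π2 = D.π2 ∘ₗ tau2 D T) (n m : ℤ) (y : H) :
    tau (D.π2 (b (n, m) ⊗ₜ[k] y)) = q ^ (n * m) • D.π2 ((b (n, -m) * y) ⊗ₜ[k] b (0, -m)) := by
  rw [← LinearMap.comp_apply, htau, LinearMap.comp_apply, tau2_tmul, hT, map_smul,
    smul_mul_assoc, map_smul, D.π2_mul_congr (hΔ n (-m)), Algebra.TensorProduct.tmul_mul_tmul,
    mul_one]

end PreBialgebroid

theorem ncTorus_tau2_cubed_general {A : Type} [Ring A] [Algebra ℂ A] (θ : ℝ)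
    (UU VV : Aˣ) (b : Module.Basis (ℤ × ℤ) ℂ A) (htorus : IsNCTorus θ UU VV b)
    (D : PreBialgebroid ℂ A (laurentSub UU)) (T : A →ₗ[ℂ] A)
    (hα : D.α = (laurentSub UU).val)
    (hβ : D.β = (laurentSub UU).val.toLinearMap)
    (hΔ : ∀ n m : ℤ, D.π2 (D.Δ (b (n, m))) = D.π2 (b (n, m) ⊗ₜ[ℂ] b (0, m)))
    (hT : ∀ n m : ℤ,
      T (b (n, m)) = (Complex.exp (2 * Real.pi * Complex.I * θ) ^ (n * m)) • b (n, -m))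
    -- `tau` is the induced cyclic operator on the quotient `A ⊗_R A`:
    (tau : ((A ⊗[ℂ] A) ⧸ D.rel2) →ₗ[ℂ] ((A ⊗[ℂ] A) ⧸ D.rel2))
    (htau : tau ∘ₗ D.π2 = D.π2 ∘ₗ PreBialgebroid.tau2 D T) :
    tau (tau (tau (D.π2 ((1 : A) ⊗ₜ[ℂ] (UU : A))))) = D.π2 ((1 : A) ⊗ₜ[ℂ] (UU : A)) ∧
    tau (tau (tau (D.π2 ((1 : A) ⊗ₜ[ℂ] (VV : A))))) = D.π2 ((1 : A) ⊗ₜ[ℂ] (VV : A)) := by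
  have hstep := D.tau_π2_monomial_tmul T b _ hΔ hT tau htau
  obtain ⟨-, hb⟩ := htorus
  have hb00 : b (0, 0) = 1 := by simp [hb]
  have hbU : b (1, 0) = UU := by simp [hb]
  have hbV : b (0, 1) = VV := by simp [hb]
  have hVV : (VV : A) * b (0, -1) = 1 := by simp [hb, ← Units.val_mul]
  have hU_balanced : D.π2 ((UU : A) ⊗ₜ[ℂ] 1) = D.π2 (1 ⊗ₜ[ℂ] (UU : A)) := by
    have hUR : (UU : A) ∈ laurentSub UU := Algebra.subset_adjoin (Set.mem_insert _ _)
    simpa [hα, hβ] using D.π2_β_tmul_one ⟨UU, hUR⟩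
  constructor
  · have hU_fixed : tau (D.π2 ((UU : A) ⊗ₜ[ℂ] 1)) = D.π2 ((UU : A) ⊗ₜ[ℂ] 1) := by
      simpa [hb00, hbU] using hstep 1 0 1
    rw [← hU_balanced, hU_fixed, hU_fixed, hU_fixed]
  · have h1 : tau (D.π2 (1 ⊗ₜ[ℂ] (VV : A))) = D.π2 ((VV : A) ⊗ₜ[ℂ] 1) := by
      simpa [hb00] using hstep 0 0 VV
    have h2 : tau (D.π2 ((VV : A) ⊗ₜ[ℂ] 1)) = D.π2 (b (0, -1) ⊗ₜ[ℂ] b (0, -1)) := by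
      simpa [hbV] using hstep 0 1 1
    have h3 : tau (D.π2 (b (0, -1) ⊗ₜ[ℂ] b (0, -1))) = D.π2 (1 ⊗ₜ[ℂ] (VV : A)) := by
      simpa [hVV, hbV] using hstep 0 (-1) (b (0, -1))
    rw [h1, h2, h3]

/-- for the noncommutative torus para-Hopf algebroid, the cyclic operator
`τ₂(h₁ ⊗_R h₂) = Δ(T h₁)·(h₂ ⊗ 1)` on `A_θ ⊗_R A_θ` satisfies
`τ₂³(1 ⊗_R U) = 1 ⊗_R U` and `τ₂³(1 ⊗_R V) = 1 ⊗_R V`. -/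
theorem ncTorus_tau2_cubed {A : Type} [Ring A] [Algebra ℂ A] (θ : ℝ)
    (UU VV : Aˣ) (b : Module.Basis (ℤ × ℤ) ℂ A) (htorus : IsNCTorus θ UU VV b)
    (D : PreBialgebroid ℂ A (laurentSub UU)) (T : A →ₗ[ℂ] A)
    (hD : D.IsParaHopf T)
    (hα : D.α = (laurentSub UU).val)
    (hβ : D.β = (laurentSub UU).val.toLinearMap)
    (hΔ : ∀ n m : ℤ, D.π2 (D.Δ (b (n, m))) = D.π2 (b (n, m) ⊗ₜ[ℂ] b (0, m)))
    (hε : ∀ n m : ℤ, (D.ε (b (n, m)) : A) = b (n, 0))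
    (hT : ∀ n m : ℤ,
      T (b (n, m)) = (Complex.exp (2 * Real.pi * Complex.I * θ) ^ (n * m)) • b (n, -m))
    -- `tau` is the induced cyclic operator on the quotient `A ⊗_R A`:
    (tau : ((A ⊗[ℂ] A) ⧸ D.rel2) →ₗ[ℂ] ((A ⊗[ℂ] A) ⧸ D.rel2))
    (htau : tau ∘ₗ D.π2 = D.π2 ∘ₗ PreBialgebroid.tau2 D T) :
    tau (tau (tau (D.π2 ((1 : A) ⊗ₜ[ℂ] (UU : A))))) = D.π2 ((1 : A) ⊗ₜ[ℂ] (UU : A)) ∧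
    tau (tau (tau (D.π2 ((1 : A) ⊗ₜ[ℂ] (VV : A))))) = D.π2 ((1 : A) ⊗ₜ[ℂ] (VV : A)) :=
  ncTorus_tau2_cubed_general θ UU VV b htorus D T hα hβ hΔ hT tau htau
end
end
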